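/- Let $\mathcal{F}_n$ be a regular family all of whose members $E$ satisfy: for any $E' < F$ with $F \in \mathcal{F}_n$ nonempty and $k \in F \setminus E'$, there is a norm-one vector $e_k$ separating $2^{-n}\sum_{i \in E'} e_i^*$ and $2^{-n}\sum_{i \in F} e_i^*$ by $2^{-n}$. Then for every $n$, every ordinal $\mu < CB(\mathcal{F}_n)$ and every $E \in \mathcal{F}_n^{(\mu)}$, the functional $2^{-n}\sum_{i \in E} e_i^*$ belongs to $s_{2^{-n-1}}^\mu(B_{G^*})$; consequently $Sz(G) \geq \sup_n CB(\mathcal{F}_n) - 1$ in the sense that $Sz(G) \geq \omega^{\omega^\zeta n}$ for all $n$ when $CB(\mathcal{F}_n) = \omega^{\omega^\zeta n}+1$, hence $Sz(G) \geq \omega^{\omega^{\zeta+1}}$. -/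

import Mathlib

/-- The indicator of a finite set of naturals, as a point of the Cantor space `ℕ → Bool`. -/
def finsetInd (E : Finset ℕ) : ℕ → Bool := fun n => decide (n ∈ E)

/-- A family of finite subsets of `ℕ`, viewed as a subset of the Cantor space. -/
def famTop (F : Set (Finset ℕ)) : Set (ℕ → Bool) := finsetInd '' F

/-- A family is hereditary if it is closed under subsets. -/
def Hereditary (F : Set (Finset ℕ)) : Prop := ∀ E ∈ F, ∀ G ⊆ E, G ∈ F

/-- `G` is a spread of `E` if they have the same cardinality and the `i`-th element of `G`
(in increasing order) is at least the `i`-th element of `E`. -/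
def IsSpreadOf (G E : Finset ℕ) : Prop :=
  ∃ h : G.card = E.card, ∀ i : Fin E.card,
    ((E.orderIsoOfFin rfl) i).1 ≤ ((G.orderIsoOfFin h) i).1

/-- A family is spreading if it contains all spreads of its members. -/
def Spreading (F : Set (Finset ℕ)) : Prop := ∀ E ∈ F, ∀ G, IsSpreadOf G E → G ∈ F

/-- A family is regular if it is hereditary, spreading, and compact in the Cantor space. -/
def RegularFam (F : Set (Finset ℕ)) : Prop :=
  Hereditary F ∧ Spreading F ∧ IsCompact (famTop F)

/-- `E < F` for finite sets: every element of `E` is less than every element of `F`. -/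
def FinsetLT (E F : Finset ℕ) : Prop := ∀ a ∈ E, ∀ b ∈ F, a < b

/-- The bracket operation
`F[G] = {∅} ∪ {E₁ ∪ ⋯ ∪ Eₙ : ∅ ≠ Eᵢ ∈ G, E₁ < ⋯ < Eₙ, (min Eᵢ)ᵢ ∈ F}`. -/
def bracketFam (F G : Set (Finset ℕ)) : Set (Finset ℕ) :=
  {∅} ∪ { E | ∃ (n : ℕ) (_ : 0 < n) (Es : Fin n → Finset ℕ)
      (hne : ∀ i, (Es i).Nonempty),
      (∀ i, Es i ∈ G) ∧ (∀ i j : Fin n, i < j → FinsetLT (Es i) (Es j)) ∧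
      (Finset.univ.image fun i => (Es i).min' (hne i)) ∈ F ∧
      E = Finset.univ.biUnion Es }

/-- The Cantor–Bendixson derived family: those `E` whose indicator is an accumulation point
of the family in the Cantor space. -/
def derivFam (F : Set (Finset ℕ)) : Set (Finset ℕ) :=
  { E | finsetInd E ∈ derivedSet (famTop F) }

/-- Transfinite iteration of the Cantor–Bendixson derived set. -/
noncomputable def CBderiv (A : Set (ℕ → Bool)) (o : Ordinal) : Set (ℕ → Bool) :=
  Ordinal.limitRecOn o A (fun _ S => derivedSet S)
    (fun o _ ih => ⋂ b : { b : Ordinal // b < o }, ih b.1 b.2)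

/-- The Cantor–Bendixson index: the least ordinal `η` with `A⁽ᵉᵗᵃ⁾ = ∅`. -/
noncomputable def CBindex (A : Set (ℕ → Bool)) : Ordinal :=
  sInf { o | CBderiv A o = ∅ }

/-- The Cantor–Bendixson index of a family of finite subsets of `ℕ`. -/
noncomputable def CBfam (F : Set (Finset ℕ)) : Ordinal := CBindex (famTop F)

/-- The `o`-th Cantor–Bendixson derived family. -/
noncomputable def derivFamIter (F : Set (Finset ℕ)) (o : Ordinal) : Set (Finset ℕ) :=
  { E | finsetInd E ∈ CBderiv (famTop F) o }

open NormedSpace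

/-- One step of the `ε`-Szlenk derivation of a set `K ⊆ X*`: the points of `K` all of whose
weak* neighborhoods meet `K` in a set of norm-diameter at least `ε`. -/
noncomputable def szDeriv {X : Type*} [NormedAddCommGroup X] [NormedSpace ℝ X]
    (ε : ℝ) (K : Set (StrongDual ℝ X)) : Set (StrongDual ℝ X) :=
  { f | f ∈ K ∧ ∀ U : Set (WeakDual ℝ X), IsOpen U → StrongDual.toWeakDual f ∈ U →
      ε ≤ Metric.diam { g | g ∈ K ∧ StrongDual.toWeakDual g ∈ U } }

/-- The transfinite iteration `s_ε^o(K)` of the `ε`-Szlenk derivation. -/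
noncomputable def szIter {X : Type*} [NormedAddCommGroup X] [NormedSpace ℝ X]
    (ε : ℝ) (K : Set (StrongDual ℝ X)) (o : Ordinal) : Set (StrongDual ℝ X) :=
  Ordinal.limitRecOn o K (fun _ S => szDeriv ε S)
    (fun o _ ih => ⋂ b : { b : Ordinal // b < o }, ih b.1 b.2)

/-!
A point `E` of `𝓕ₙ^{(ν+1)}` is a limit of points `E' ≠ E` of `𝓕ₙ^{(ν)}`. The functionals
`φ E = 2⁻ⁿ ∑_{i ∈ E} f i` are weak*-continuous in `E` and pairwise `2⁻ⁿ`-separated in norm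
(test against `e k` for `k ∈ E ∆ E'`), so every weak*-neighbourhood of `φ E` contains some `φ E'`
at distance `≥ 2⁻ⁿ`; by transfinite induction `φ` maps `𝓕ₙ^{(μ)}` into `s_{2^{-n-1}}^μ(B_{G*})`.
The index bounds follow because `𝓕ₙ^{(μ)} ≠ ∅` for `μ < CB(𝓕ₙ)` and
`ω^{ω^{ζ+1}} = sup_n ω^{ω^ζ n}`.
-/

lemma finsetInd_injective : Function.Injective finsetInd := fun _ _ h =>
  Finset.ext fun k => by simpa [finsetInd] using congrFun h k

lemma RegularFam.isClosed_famTop {F : Set (Finset ℕ)} (hF : RegularFam F) :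
    IsClosed (famTop F) :=
  hF.2.2.isClosed

lemma finsetInd_mem_famTop {F : Set (Finset ℕ)} {E : Finset ℕ} :
    finsetInd E ∈ famTop F ↔ E ∈ F :=
  finsetInd_injective.mem_set_image

section CantorBendixson

variable (A : Set (ℕ → Bool))

lemma CBderiv_zero : CBderiv A 0 = A :=
  Ordinal.limitRecOn_zero ..

lemma CBderiv_add_one (o : Ordinal) : CBderiv A (o + 1) = derivedSet (CBderiv A o) :=
  Ordinal.limitRecOn_add_one ..

lemma CBderiv_limit {o : Ordinal} (h : Order.IsSuccLimit o) :
    CBderiv A o = ⋂ b : { b : Ordinal // b < o }, CBderiv A b.1 :=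
  Ordinal.limitRecOn_limit _ _ _ _ h

variable {A}

lemma isClosed_CBderiv (hA : IsClosed A) (o : Ordinal) : IsClosed (CBderiv A o) := by
  induction o using Ordinal.limitRecOn with
  | zero => rwa [CBderiv_zero]
  | add_one o _ => rw [CBderiv_add_one]; exact isClosed_derivedSet _
  | limit o ho ih => rw [CBderiv_limit _ ho]; exact isClosed_iInter fun b => ih b.1 b.2

lemma CBderiv_add_one_subset (hA : IsClosed A) (o : Ordinal) :
    CBderiv A (o + 1) ⊆ CBderiv A o := by
  rw [CBderiv_add_one]
  exact (isClosed_iff_derivedSet_subset _).mp (isClosed_CBderiv hA o)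

lemma CBderiv_subset (hA : IsClosed A) (o : Ordinal) : CBderiv A o ⊆ A := by
  induction o using Ordinal.limitRecOn with
  | zero => rw [CBderiv_zero]
  | add_one o ih => exact (CBderiv_add_one_subset hA o).trans ih
  | limit o ho ih =>
      rw [CBderiv_limit _ ho]
      exact (Set.iInter_subset _ ⟨0, ho.pos⟩).trans (ih 0 ho.pos)

lemma nonempty_CBderiv_of_lt_CBindex {o : Ordinal} (ho : o < CBindex A) :
    (CBderiv A o).Nonempty :=
  Set.nonempty_iff_ne_empty.mpr fun h =>
    (csInf_le' (s := { o | CBderiv A o = ∅ }) h).not_gt ho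

end CantorBendixson

lemma nonempty_derivFamIter_of_lt_CBfam {F : Set (Finset ℕ)} (hF : IsClosed (famTop F))
    {o : Ordinal} (ho : o < CBfam F) : (derivFamIter F o).Nonempty := by
  obtain ⟨y, hy⟩ := nonempty_CBderiv_of_lt_CBindex ho
  obtain ⟨E, -, rfl⟩ := CBderiv_subset hF o hy
  exact ⟨E, hy⟩

section Szlenk

variable {X : Type*} [NormedAddCommGroup X] [NormedSpace ℝ X] (ε : ℝ) (K : Set (StrongDual ℝ X))

lemma szIter_zero : szIter ε K 0 = K :=
  Ordinal.limitRecOn_zero ..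

lemma szIter_add_one (o : Ordinal) : szIter ε K (o + 1) = szDeriv ε (szIter ε K o) :=
  Ordinal.limitRecOn_add_one ..

lemma szIter_limit {o : Ordinal} (h : Order.IsSuccLimit o) :
    szIter ε K o = ⋂ b : { b : Ordinal // b < o }, szIter ε K b.1 :=
  Ordinal.limitRecOn_limit _ _ _ _ h

lemma szIter_subset (o : Ordinal) : szIter ε K o ⊆ K := by
  induction o using Ordinal.limitRecOn with
  | zero => rw [szIter_zero]
  | add_one o ih => rw [szIter_add_one]; exact fun g hg => ih hg.1
  | limit o ho ih =>
      rw [szIter_limit _ _ ho]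
      exact (Set.iInter_subset _ ⟨0, ho.pos⟩).trans (ih 0 ho.pos)

end Szlenk

section Transfer

variable {X : Type*} [NormedAddCommGroup X] [NormedSpace ℝ X]
  {F : Set (Finset ℕ)} {φ : Finset ℕ → StrongDual ℝ X}

lemma exists_isOpen_preimage_of_continuous_induced
    (hφ : letI : TopologicalSpace { E : Finset ℕ // E ∈ F } :=
        TopologicalSpace.induced (fun E => finsetInd E.1) inferInstance
      Continuous (fun E : { E : Finset ℕ // E ∈ F } => StrongDual.toWeakDual (φ E.1)))
    {U : Set (WeakDual ℝ X)} (hU : IsOpen U) :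
    ∃ V : Set (ℕ → Bool), IsOpen V ∧
      ∀ E ∈ F, (finsetInd E ∈ V ↔ StrongDual.toWeakDual (φ E) ∈ U) := by
  let : TopologicalSpace { E : Finset ℕ // E ∈ F } :=
    TopologicalSpace.induced (fun E => finsetInd E.1) inferInstance
  obtain ⟨V, hV, hVU⟩ := isOpen_induced_iff.mp (hφ.isOpen_preimage U hU)
  exact ⟨V, hV, fun E hE => Set.ext_iff.mp hVU ⟨E, hE⟩⟩

theorem mem_szIter_of_mem_derivFamIter {ε : ℝ} {K : Set (StrongDual ℝ X)}
    (hF : IsClosed (famTop F)) (hK : Bornology.IsBounded K) (hφK : Set.MapsTo φ F K)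
    (hsep : F.Pairwise fun E E' => ε ≤ dist (φ E) (φ E'))
    (hφ : letI : TopologicalSpace { E : Finset ℕ // E ∈ F } :=
        TopologicalSpace.induced (fun E => finsetInd E.1) inferInstance
      Continuous (fun E : { E : Finset ℕ // E ∈ F } => StrongDual.toWeakDual (φ E.1)))
    (μ : Ordinal) : Set.MapsTo φ (derivFamIter F μ) (szIter ε K μ) := by
  have mem_F {ν : Ordinal} {E : Finset ℕ} (hE : E ∈ derivFamIter F ν) : E ∈ F :=
    finsetInd_mem_famTop.mp (CBderiv_subset hF ν hE)
  induction μ using Ordinal.limitRecOn with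
  | zero =>
      intro E hE
      rw [szIter_zero]
      exact hφK (mem_F (ν := 0) hE)
  | add_one ν ih =>
      intro E hE
      have hEν : E ∈ derivFamIter F ν := CBderiv_add_one_subset hF ν hE
      rw [szIter_add_one]
      refine ⟨ih hEν, fun U hU hEU => ?_⟩
      obtain ⟨V, hV, hVU⟩ := exists_isOpen_preimage_of_continuous_induced hφ hU
      have hEacc : AccPt (finsetInd E) (Filter.principal (CBderiv (famTop F) ν)) := by
        rw [← mem_derivedSet, ← CBderiv_add_one]; exact hE
      obtain ⟨y, ⟨hyV, hyν⟩, hyE⟩ :=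
        accPt_iff_nhds.mp hEacc V (hV.mem_nhds ((hVU E (mem_F hEν)).mpr hEU))
      obtain ⟨E', -, rfl⟩ := CBderiv_subset hF ν hyν
      have hE'ν : E' ∈ derivFamIter F ν := hyν
      have hS : Bornology.IsBounded
          { g | g ∈ szIter ε K ν ∧ StrongDual.toWeakDual g ∈ U } :=
        hK.subset fun g hg => szIter_subset ε K ν hg.1
      calc ε ≤ dist (φ E) (φ E') :=
            hsep (mem_F hEν) (mem_F hE'ν) fun h => hyE (congrArg finsetInd h.symm)
        _ ≤ _ := Metric.dist_le_diam_of_mem hS ⟨ih hEν, hEU⟩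
            ⟨ih hE'ν, (hVU E' (mem_F hE'ν)).mp hyV⟩
  | limit ν hν ih =>
      intro E hE
      have hE' : finsetInd E ∈ ⋂ b : { b : Ordinal // b < ν }, CBderiv (famTop F) b.1 := by
        rw [← CBderiv_limit _ hν]; exact hE
      rw [szIter_limit _ _ hν, Set.mem_iInter]
      exact fun b => ih b.1 b.2 (Set.mem_iInter.mp hE' b)

end Transfer

section Biorthogonal

variable {G : Type*} [NormedAddCommGroup G] [NormedSpace ℝ G]
  {e : ℕ → G} {f : ℕ → StrongDual ℝ G}

lemma sum_apply_of_biorthogonal (hbi : ∀ i k : ℕ, f i (e k) = if i = k then 1 else 0)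
    (E : Finset ℕ) (k : ℕ) : (∑ i ∈ E, f i) (e k) = if k ∈ E then 1 else 0 := by
  simp [hbi]

lemma le_dist_smul_sum_of_biorthogonal (he : ∀ k, ‖e k‖ ≤ 1)
    (hbi : ∀ i k : ℕ, f i (e k) = if i = k then 1 else 0) {c : ℝ} (hc : 0 ≤ c) :
    Pairwise fun E E' : Finset ℕ => c ≤ dist (c • ∑ i ∈ E, f i) (c • ∑ i ∈ E', f i) := by
  intro E E' hEE'
  obtain ⟨k, hk⟩ : ∃ k, ¬(k ∈ E ↔ k ∈ E') := by
    by_contra! h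
    exact hEE' (Finset.ext h)
  rw [dist_eq_norm]
  calc c = ‖(c • ∑ i ∈ E, f i - c • ∑ i ∈ E', f i) (e k)‖ := by
        by_cases hkE : k ∈ E <;> simp_all [sum_apply_of_biorthogonal hbi, abs_of_nonneg hc]
    _ ≤ _ := ContinuousLinearMap.unit_le_opNorm _ _ (he k)

lemma smul_sum_mem_szIter (he : ∀ k, ‖e k‖ ≤ 1)
    (hbi : ∀ i k : ℕ, f i (e k) = if i = k then 1 else 0) {F : Set (Finset ℕ)}
    (hF : IsClosed (famTop F)) {n : ℕ} (hball : ∀ E ∈ F, ‖((2 : ℝ) ^ n)⁻¹ • ∑ i ∈ E, f i‖ ≤ 1)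
    (hcont : letI : TopologicalSpace { E : Finset ℕ // E ∈ F } :=
        TopologicalSpace.induced (fun E => finsetInd E.1) inferInstance
      Continuous (fun E : { E : Finset ℕ // E ∈ F } =>
        StrongDual.toWeakDual (((2 : ℝ) ^ n)⁻¹ • ∑ i ∈ E.1, f i)))
    (μ : Ordinal) :
    Set.MapsTo (fun E => ((2 : ℝ) ^ n)⁻¹ • ∑ i ∈ E, f i) (derivFamIter F μ)
      (szIter ((2 ^ (n + 1))⁻¹) (Metric.closedBall 0 1) μ) := by
  have hε : ((2 : ℝ) ^ (n + 1))⁻¹ ≤ ((2 : ℝ) ^ n)⁻¹ :=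
    inv_anti₀ (by positivity) (pow_le_pow_right₀ one_le_two n.le_succ)
  refine mem_szIter_of_mem_derivFamIter hF Metric.isBounded_closedBall
    (fun E hE => mem_closedBall_zero_iff.mpr (hball E hE)) ?_ hcont μ
  exact ((le_dist_smul_sum_of_biorthogonal he hbi (by positivity)).set_pairwise F).mono'
    fun _ _ h => hε.trans h

end Biorthogonal

open Ordinal in
lemma Ordinal.exists_nat_lt_omega0_opow_mul {ζ o : Ordinal}
    (ho : o < ω ^ (ω ^ (ζ + 1))) : ∃ m : ℕ, o < ω ^ (ω ^ ζ * m) := by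
  rw [opow_add, opow_one] at ho
  have hlim : Order.IsSuccLimit (ω ^ ζ * ω) :=
    isSuccLimit_mul_right (opow_pos ζ omega0_pos) isSuccLimit_omega0
  obtain ⟨b, hb, hob⟩ := (lt_opow_of_isSuccLimit omega0_ne_zero hlim).mp ho
  obtain ⟨c, hc, hbc⟩ := (lt_mul_iff_of_isSuccLimit isSuccLimit_omega0).mp hb
  obtain ⟨m, rfl⟩ := lt_omega0.mp hc
  exact ⟨m, hob.trans_le (opow_le_opow_right omega0_pos hbc.le)⟩

theorem szlenk_lower_bound_general {G : Type*} [NormedAddCommGroup G] [NormedSpace ℝ G]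
    (e : ℕ → G) (f : ℕ → StrongDual ℝ G)
    (he : ∀ k, ‖e k‖ = 1)
    (hbi : ∀ i k : ℕ, f i (e k) = if i = k then 1 else 0)
    (F : ℕ → Set (Finset ℕ)) (hreg : ∀ n, RegularFam (F n))
    (hball : ∀ (n : ℕ) (E : Finset ℕ), E ∈ F n →
      ‖((2 : ℝ) ^ n)⁻¹ • ∑ i ∈ E, f i‖ ≤ 1)
    (hcont : ∀ n : ℕ,
      letI : TopologicalSpace { E : Finset ℕ // E ∈ F n } :=
        TopologicalSpace.induced (fun E => finsetInd E.1) inferInstance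
      Continuous (fun E : { E : Finset ℕ // E ∈ F n } =>
        StrongDual.toWeakDual (((2 : ℝ) ^ n)⁻¹ • ∑ i ∈ E.1, f i))) :
    (∀ (n : ℕ) (μ : Ordinal) (E : Finset ℕ), E ∈ derivFamIter (F n) μ →
        ((2 : ℝ) ^ n)⁻¹ • ∑ i ∈ E, f i ∈
          szIter (((2 : ℝ) ^ (n + 1))⁻¹)
            (Metric.closedBall (0 : StrongDual ℝ G) 1) μ) ∧
    ∀ ζ : Ordinal,
      (∀ n : ℕ, CBfam (F n) = Ordinal.omega0 ^ (Ordinal.omega0 ^ ζ * n) + 1) →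
      (∀ n : ℕ, ∀ o < Ordinal.omega0 ^ (Ordinal.omega0 ^ ζ * n),
        szIter (((2 : ℝ) ^ (n + 1))⁻¹)
          (Metric.closedBall (0 : StrongDual ℝ G) 1) o ≠ ∅) ∧
      ∀ o < Ordinal.omega0 ^ (Ordinal.omega0 ^ (ζ + 1)), ∃ ε > (0 : ℝ),
        szIter ε (Metric.closedBall (0 : StrongDual ℝ G) 1) o ≠ ∅ := by
  have he' k : ‖e k‖ ≤ 1 := (he k).le
  refine ⟨fun n μ E hE =>
    smul_sum_mem_szIter he' hbi (hreg n).isClosed_famTop (hball n) (hcont n) μ hE,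
    fun ζ hCB => ?_⟩
  have nonempty (n : ℕ) (o : Ordinal) (ho : o < Ordinal.omega0 ^ (Ordinal.omega0 ^ ζ * n)) :
      szIter ((2 ^ (n + 1))⁻¹) (Metric.closedBall (0 : StrongDual ℝ G) 1) o ≠ ∅ := by
    have hlt : o < CBfam (F n) := (hCB n).symm ▸ ho.trans_le le_self_add
    obtain ⟨E, hE⟩ := nonempty_derivFamIter_of_lt_CBfam (hreg n).isClosed_famTop hlt
    exact Set.nonempty_iff_ne_empty.mp
      ⟨_, smul_sum_mem_szIter he' hbi (hreg n).isClosed_famTop (hball n) (hcont n) o hE⟩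
  refine ⟨nonempty, fun o ho => ?_⟩
  obtain ⟨m, hm⟩ := Ordinal.exists_nat_lt_omega0_opow_mul ho
  exact ⟨(2 ^ (m + 1))⁻¹, by positivity, nonempty m o hm⟩

/-- Lower Szlenk estimate for the space `G` built from regular families `𝓕ₙ`: with
biorthogonal systems `(e_k, f_i)` (so `‖e_k‖ = 1`, `f i (e k) = δ_{ik}`), and each
`2⁻ⁿ ∑_{i ∈ E} f i`, `E ∈ 𝓕ₙ`, in the dual ball (weak*-continuously in `E`), every
`E ∈ 𝓕ₙ^{(μ)}` yields `2⁻ⁿ ∑_{i ∈ E} f i ∈ s_{2^{-n-1}}^μ(B_{G*})`. Consequently, if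
`CB(𝓕ₙ) = ω^{ω^ζ n} + 1` for all `n`, then `Sz(G) ≥ ω^{ω^ζ n}` for every `n`, and hence
`Sz(G) ≥ ω^{ω^{ζ+1}}` (the Szlenk derivations below these ordinals are nonempty). -/
theorem szlenk_lower_bound {G : Type*} [NormedAddCommGroup G] [NormedSpace ℝ G]
    [CompleteSpace G]
    (e : ℕ → G) (f : ℕ → StrongDual ℝ G)
    (he : ∀ k, ‖e k‖ = 1)
    (hbi : ∀ i k : ℕ, f i (e k) = if i = k then 1 else 0)
    (F : ℕ → Set (Finset ℕ)) (hreg : ∀ n, RegularFam (F n))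
    (hball : ∀ (n : ℕ) (E : Finset ℕ), E ∈ F n →
      ‖((2 : ℝ) ^ n)⁻¹ • ∑ i ∈ E, f i‖ ≤ 1)
    (hcont : ∀ n : ℕ,
      letI : TopologicalSpace { E : Finset ℕ // E ∈ F n } :=
        TopologicalSpace.induced (fun E => finsetInd E.1) inferInstance
      Continuous (fun E : { E : Finset ℕ // E ∈ F n } =>
        StrongDual.toWeakDual (((2 : ℝ) ^ n)⁻¹ • ∑ i ∈ E.1, f i))) :
    (∀ (n : ℕ) (μ : Ordinal) (E : Finset ℕ), E ∈ derivFamIter (F n) μ →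
        ((2 : ℝ) ^ n)⁻¹ • ∑ i ∈ E, f i ∈
          szIter (((2 : ℝ) ^ (n + 1))⁻¹)
            (Metric.closedBall (0 : StrongDual ℝ G) 1) μ) ∧
    ∀ ζ : Ordinal,
      (∀ n : ℕ, CBfam (F n) = Ordinal.omega0 ^ (Ordinal.omega0 ^ ζ * n) + 1) →
      (∀ n : ℕ, ∀ o < Ordinal.omega0 ^ (Ordinal.omega0 ^ ζ * n),
        szIter (((2 : ℝ) ^ (n + 1))⁻¹)
          (Metric.closedBall (0 : StrongDual ℝ G) 1) o ≠ ∅) ∧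
      ∀ o < Ordinal.omega0 ^ (Ordinal.omega0 ^ (ζ + 1)), ∃ ε > (0 : ℝ),
        szIter ε (Metric.closedBall (0 : StrongDual ℝ G) 1) o ≠ ∅ :=
  szlenk_lower_bound_general e f he hbi F hreg hball hcont
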